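/- arXiv:1406.1873 — 2 statements merged into one kernel-verified Lean document; each statement's English description precedes it below -/
import Mathlib

section
/- For every nonzero point x ∈ R^3, the ray spanned by the point evaluation ev_x is an extreme ray of the dual cone Σ_{2d}^∨ of the cone of sums of squares of ternary forms of degree d. -/
open MvPolynomial

/-- The space of ternary forms of degree `n`. -/
noncomputable abbrev ternaryForms (n : ℕ) : Submodule ℝ (MvPolynomial (Fin 3) ℝ) :=
  homogeneousSubmodule (Fin 3) ℝ n

/-- The square of a ternary form of degree `d`, as a form of degree `2d`. -/
noncomputable def sqForm (d : ℕ) (f : ternaryForms d) : ternaryForms (2 * d) :=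
  ⟨f.1 * f.1, by
    rw [mem_homogeneousSubmodule] at *
    simpa [two_mul] using f.2.mul f.2⟩

/-- Membership in the dual cone `Σ_{2d}^∨` of the cone of sums of squares:
a linear functional on forms of degree `2d` which is nonnegative
on every square of a degree-`d` form. -/
def InDualSOS (d : ℕ) (ℓ : ternaryForms (2 * d) →ₗ[ℝ] ℝ) : Prop :=
  ∀ f : ternaryForms d, 0 ≤ ℓ (sqForm d f)

/-- Evaluation at a point `x ∈ ℝ³`, as a linear functional on forms of degree `2d`. -/
noncomputable def evFun (d : ℕ) (x : Fin 3 → ℝ) : ternaryForms (2 * d) →ₗ[ℝ] ℝ :=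
  (aeval x).toLinearMap ∘ₗ (ternaryForms (2 * d)).subtype

/-! If `ev_x = ℓ₁ + ℓ₂` with both `ℓᵢ` nonnegative on squares, then `Bᵢ(f, g) = ℓᵢ(f g)` is a
positive semidefinite symmetric bilinear form on forms of degree `d` with `Bᵢ(f, f) ≤ f(x)²`.
By Cauchy–Schwarz `Bᵢ(f, ·)` vanishes whenever `f(x) = 0`, so `Bᵢ(f, g) = cᵢ f(x) g(x)` with
`cᵢ ≥ 0`. Every monomial of degree `2d` is a product of two monomials of degree `d`, so such
products span the forms of degree `2d`, and therefore `ℓᵢ = cᵢ ev_x`. -/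

namespace LinearMap.BilinForm

variable {K M : Type*} [Field K] [LinearOrder K] [IsStrictOrderedRing K] [AddCommGroup M]
  [Module K M] {B : LinearMap.BilinForm K M}

theorem apply_eq_zero_of_apply_self_eq_zero (hB : B.IsSymm) (hpsd : ∀ v, 0 ≤ B v v) {v : M}
    (hv : B v v = 0) (w : M) : B v w = 0 := by
  -- `t ↦ B (v + t w) (v + t w)` is a nonnegative quadratic with discriminant `4 (B v w)²`
  have hdisc : discrim (B w w) (2 * B v w) 0 ≤ 0 := discrim_le_zero fun t => by
    have := hpsd (v + t • w)
    simp only [map_add, map_smul, LinearMap.add_apply, LinearMap.smul_apply, smul_eq_mul, hv,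
      hB.eq w v] at this
    linarith
  rw [discrim] at hdisc
  nlinarith [sq_nonneg (B v w)]

theorem exists_eq_smul_mul_of_le_sq (hB : B.IsSymm) (hpsd : ∀ v, 0 ≤ B v v) (φ : M →ₗ[K] K)
    (hle : ∀ v, B v v ≤ φ v ^ 2) : ∃ c, 0 ≤ c ∧ ∀ v w, B v w = c * (φ v * φ w) := by
  have hker {v : M} (hv : φ v = 0) (w : M) : B v w = 0 :=
    apply_eq_zero_of_apply_self_eq_zero hB hpsd
      (le_antisymm (by simpa [hv] using hle v) (hpsd v)) w
  by_cases hφ : ∃ p, φ p ≠ 0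
  · obtain ⟨p, hp⟩ := hφ
    have hproj (v w : M) : B v w = φ v / φ p * B p w := by
      have h := hker (v := v - (φ v / φ p) • p) (by simp [hp]) w
      simpa [sub_eq_zero] using h
    refine ⟨B p p / φ p ^ 2, div_nonneg (hpsd p) (sq_nonneg _), fun v w => ?_⟩
    rw [hproj v w, ← hB.eq, hproj w p]
    field_simp
  · push Not at hφ
    exact ⟨0, le_rfl, fun v w => by simp [hker (hφ v) w]⟩

end LinearMap.BilinForm

namespace MvPolynomial

variable {σ R : Type*} [CommRing R]

theorem homogeneousSubmodule_mul_eq (m n : ℕ) :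
    homogeneousSubmodule σ R m * homogeneousSubmodule σ R n =
      homogeneousSubmodule σ R (m + n) := by
  refine le_antisymm (homogeneousSubmodule_mul m n) ?_
  rw [homogeneousSubmodule_eq_finsupp_supported, AddMonoidAlgebra.supported_eq_span_single,
    Submodule.span_le]
  rintro _ ⟨α, hα : α.degree = m + n, rfl⟩
  obtain ⟨β, hβα, hβ⟩ := Finsupp.exists_le_degree_eq α m (by omega)
  obtain ⟨γ, rfl⟩ := le_iff_exists_add.mp hβα
  have hγ : γ.degree = n := by rw [map_add] at hα; omega
  have hsplit : monomial (β + γ) (1 : R) = monomial β 1 * monomial γ 1 := by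
    rw [monomial_mul, one_mul]
  show monomial (β + γ) (1 : R) ∈ _
  rw [hsplit]
  exact Submodule.mul_mem_mul (isHomogeneous_monomial _ hβ) (isHomogeneous_monomial _ hγ)

variable (σ R) in
noncomputable def homogeneousMul (d : ℕ) :
    homogeneousSubmodule σ R d →ₗ[R] homogeneousSubmodule σ R d →ₗ[R]
      homogeneousSubmodule σ R (2 * d) :=
  LinearMap.mk₂ R (fun f g => ⟨f * g, two_mul d ▸ f.2.mul g.2⟩)
    (fun _ _ _ => Subtype.ext (add_mul _ _ _)) (fun _ _ _ => Subtype.ext (smul_mul_assoc _ _ _))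
    (fun _ _ _ => Subtype.ext (mul_add _ _ _)) (fun _ _ _ => Subtype.ext (mul_smul_comm _ _ _))

@[simp]
theorem coe_homogeneousMul {d : ℕ} (f g : homogeneousSubmodule σ R d) :
    (homogeneousMul σ R d f g : MvPolynomial σ R) = f * g := rfl

theorem homogeneousMul_comm {d : ℕ} (f g : homogeneousSubmodule σ R d) :
    homogeneousMul σ R d f g = homogeneousMul σ R d g f :=
  Subtype.ext (mul_comm _ _)

theorem linearMap_ext_homogeneousMul {M : Type*} [AddCommGroup M] [Module R M] {d : ℕ}
    {ℓ ℓ' : homogeneousSubmodule σ R (2 * d) →ₗ[R] M}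
    (h : ∀ f g, ℓ (homogeneousMul σ R d f g) = ℓ' (homogeneousMul σ R d f g)) : ℓ = ℓ' := by
  have hmem {p : MvPolynomial σ R}
      (hp : p ∈ homogeneousSubmodule σ R d * homogeneousSubmodule σ R d) :
      p ∈ homogeneousSubmodule σ R (2 * d) :=
    two_mul d ▸ homogeneousSubmodule_mul d d hp
  have hprod (p) (hp : p ∈ homogeneousSubmodule σ R d * homogeneousSubmodule σ R d) :
      ℓ ⟨p, hmem hp⟩ = ℓ' ⟨p, hmem hp⟩ := by
    induction hp using Submodule.mul_induction_on' with
    | mem_mul_mem f hf g hg => exact h ⟨f, hf⟩ ⟨g, hg⟩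
    | add p hp q hq hp' hq' =>
      have := congrArg₂ (· + ·) hp' hq'
      rwa [← map_add, ← map_add] at this
  ext p
  exact hprod p (by rw [homogeneousSubmodule_mul_eq, ← two_mul]; exact p.2)

theorem eq_smul_aeval_of_le_sq {K : Type*} [Field K] [LinearOrder K] [IsStrictOrderedRing K]
    {d : ℕ} (x : σ → K) (ℓ : homogeneousSubmodule σ K (2 * d) →ₗ[K] K)
    (hpsd : ∀ f, 0 ≤ ℓ (homogeneousMul σ K d f f))
    (hle : ∀ f, ℓ (homogeneousMul σ K d f f) ≤ aeval x (f : MvPolynomial σ K) ^ 2) :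
    ∃ c : K, 0 ≤ c ∧
      ℓ = c • ((aeval x).toLinearMap ∘ₗ (homogeneousSubmodule σ K (2 * d)).subtype) := by
  obtain ⟨c, hc, hB⟩ := LinearMap.BilinForm.exists_eq_smul_mul_of_le_sq
    (B := (homogeneousMul σ K d).compr₂ ℓ) ⟨fun f g => by simp [homogeneousMul_comm]⟩ hpsd
    ((aeval x).toLinearMap ∘ₗ (homogeneousSubmodule σ K d).subtype) hle
  refine ⟨c, hc, linearMap_ext_homogeneousMul fun f g => ?_⟩
  simpa using hB f g

end MvPolynomial

theorem sqForm_eq_homogeneousMul {d : ℕ} (f : ternaryForms d) :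
    sqForm d f = homogeneousMul (Fin 3) ℝ d f f :=
  rfl

theorem stmt2_general (d : ℕ) (x : Fin 3 → ℝ) :
    ∀ ℓ₁ ℓ₂ : ternaryForms (2 * d) →ₗ[ℝ] ℝ,
      InDualSOS d ℓ₁ → InDualSOS d ℓ₂ → evFun d x = ℓ₁ + ℓ₂ →
        ∃ c₁ c₂ : ℝ, 0 ≤ c₁ ∧ 0 ≤ c₂ ∧
          ℓ₁ = c₁ • evFun d x ∧ ℓ₂ = c₂ • evFun d x := by
  intro ℓ₁ ℓ₂ h₁ h₂ hsum
  have hsq (f : ternaryForms d) : ℓ₁ (sqForm d f) + ℓ₂ (sqForm d f) = aeval x f.1 ^ 2 := by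
    rw [← LinearMap.add_apply, ← hsum]
    simp [evFun, sqForm, sq]
  obtain ⟨c₁, hc₁, hℓ₁⟩ := eq_smul_aeval_of_le_sq x ℓ₁ h₁ fun f => by
    rw [← sqForm_eq_homogeneousMul]; linarith [h₂ f, hsq f]
  obtain ⟨c₂, hc₂, hℓ₂⟩ := eq_smul_aeval_of_le_sq x ℓ₂ h₂ fun f => by
    rw [← sqForm_eq_homogeneousMul]; linarith [h₁ f, hsq f]
  exact ⟨c₁, c₂, hc₁, hc₂, hℓ₁, hℓ₂⟩

/-- for every nonzero `x ∈ ℝ³`, the ray spanned by the point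
evaluation `ev_x` is an extreme ray of the dual cone `Σ_{2d}^∨`. -/
theorem stmt2 (d : ℕ) (x : Fin 3 → ℝ) (hx : x ≠ 0) :
    ∀ ℓ₁ ℓ₂ : ternaryForms (2 * d) →ₗ[ℝ] ℝ,
      InDualSOS d ℓ₁ → InDualSOS d ℓ₂ → evFun d x = ℓ₁ + ℓ₂ →
        ∃ c₁ c₂ : ℝ, 0 ≤ c₁ ∧ 0 ≤ c₂ ∧
          ℓ₁ = c₁ • evFun d x ∧ ℓ₂ = c₂ • evFun d x :=
  stmt2_general d x
end

section
/- Let d ≥ 4 and let Γ_2 = {(x,y) ∈ {0,…,d−1}² : x+y = 2 or x+y = d+j for some 1 ≤ j ≤ d−4}. Then every polynomial f ∈ R[x,y] of total degree at most d−3 vanishing at all points of Γ_2 is a scalar multiple of (x+y−2)·∏_{j=1}^{d−4}(x+y−(d+j)). -/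
/-!
Restricting `f` to the line `x + y = s` gives a univariate polynomial of degree at most
`totalDegree f`, so if `f` vanishes at more than `totalDegree f` points of the line, then
`x + y - s` divides `f`, and the quotient has smaller total degree and still vanishes on the
points of the other lines. Dividing out the lines `x + y = d + j` one after the other (each has
exactly one point more than the current degree bound) and finally `x + y = 2` leaves a constant.
-/

open MvPolynomial Finset

namespace MvPolynomial

theorem natDegree_aeval_le_totalDegree {σ R : Type*} [CommSemiring R] {g : σ → Polynomial R}
    (hg : ∀ i, (g i).natDegree ≤ 1) (f : MvPolynomial σ R) :
    (aeval g f).natDegree ≤ f.totalDegree := by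
  conv_lhs => rw [f.as_sum, map_sum]
  refine Polynomial.natDegree_sum_le_of_forall_le _ _ fun m hm => ?_
  rw [aeval_monomial, ← Polynomial.C_eq_algebraMap]
  calc (Polynomial.C (coeff m f) * m.prod fun i e => g i ^ e).natDegree
      ≤ ∑ i ∈ m.support, (g i ^ m i).natDegree :=
        (Polynomial.natDegree_C_mul_le _ _).trans (Polynomial.natDegree_prod_le _ _)
    _ ≤ ∑ i ∈ m.support, m i :=
        sum_le_sum fun i _ => (Polynomial.natDegree_pow_le_of_le _ (hg i)).trans_eq (mul_one _)
    _ ≤ f.totalDegree := le_totalDegree hm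

variable {R : Type*} [CommRing R]

/-- The restriction of `f` to the line `x + y = s`, parametrised by `t ↦ (s - t, t)`. -/
noncomputable def lineRestrict (s : R) : MvPolynomial (Fin 2) R →ₐ[R] Polynomial R :=
  aeval ![Polynomial.C s - Polynomial.X, Polynomial.X]

theorem eval_lineRestrict (s t : R) (f : MvPolynomial (Fin 2) R) :
    (lineRestrict s f).eval t = eval ![s - t, t] f := by
  rw [← Polynomial.coe_aeval_eq_eval, ← AlgHom.comp_apply, lineRestrict, comp_aeval,
    ← coe_aeval_eq_eval]
  show aeval _ f = aeval _ f
  congr 2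
  funext i
  fin_cases i <;> simp

theorem natDegree_lineRestrict_le (s : R) (f : MvPolynomial (Fin 2) R) :
    (lineRestrict s f).natDegree ≤ f.totalDegree := by
  refine natDegree_aeval_le_totalDegree (fun i => ?_) f
  fin_cases i
  · simpa using Polynomial.natDegree_sub_le_of_le (Polynomial.natDegree_C s).le
      Polynomial.natDegree_X_le
  · exact Polynomial.natDegree_X_le

theorem dvd_of_lineRestrict_eq_zero {s : R} {f : MvPolynomial (Fin 2) R}
    (h : lineRestrict s f = 0) : X 0 + X 1 - C s ∣ f := by
  -- Modulo `x + y - s`, substituting `s - y` for `x` changes nothing.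
  let q := Ideal.Quotient.mkₐ R (Ideal.span {(X 0 + X 1 - C s : MvPolynomial (Fin 2) R)})
  have hq : (q.comp (Polynomial.aeval (X 1))).comp (lineRestrict s) = q := by
    ext i
    fin_cases i
    · simp only [q, lineRestrict, AlgHom.comp_apply, aeval_X, Ideal.Quotient.mkₐ_eq_mk]
      exact Ideal.Quotient.eq.2 (Ideal.mem_span_singleton.2 ⟨-1, by simp; ring⟩)
    · simp [q, lineRestrict]
  rw [← Ideal.mem_span_singleton, ← Ideal.Quotient.eq_zero_iff_mem,
    ← Ideal.Quotient.mkₐ_eq_mk R]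
  change q f = 0
  rw [← hq, AlgHom.comp_apply, h, map_zero]

theorem dvd_of_eval_eq_zero_of_totalDegree_lt_card [IsDomain R] {s : R}
    {f : MvPolynomial (Fin 2) R} (T : Finset R) (hT : f.totalDegree < #T)
    (h : ∀ t ∈ T, eval ![s - t, t] f = 0) : X 0 + X 1 - C s ∣ f := by
  refine dvd_of_lineRestrict_eq_zero <|
    Polynomial.eq_zero_of_natDegree_lt_card_of_eval_eq_zero' _ T (fun t ht => ?_) ?_
  · rw [eval_lineRestrict, h t ht]
  · exact (natDegree_lineRestrict_le s f).trans_lt hT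

theorem one_le_totalDegree_X_add_X_sub_C [Nontrivial R] (s : R) :
    1 ≤ (X 0 + X 1 - C s : MvPolynomial (Fin 2) R).totalDegree := by
  have hmem : Finsupp.single 0 1 ∈ (X 0 + X 1 - C s : MvPolynomial (Fin 2) R).support := by
    simp [mem_support_iff, coeff_X, coeff_C, Finsupp.single_eq_single_iff,
      eq_comm (a := (0 : Fin 2 →₀ ℕ))]
  simpa using le_totalDegree hmem

theorem eq_smul_prod_of_eval_eq_zero [IsDomain R] {n : ℕ} {s : Fin n → R}
    (hs : Function.Injective s) (T : Fin n → Finset R) (hT : ∀ i, n < #(T i) + i)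
    {f : MvPolynomial (Fin 2) R} (hf : f.totalDegree ≤ n)
    (hvan : ∀ i, ∀ t ∈ T i, eval ![s i - t, t] f = 0) :
    ∃ c : R, f = c • ∏ i, (X 0 + X 1 - C (s i)) := by
  induction n generalizing f with
  | zero =>
    exact ⟨coeff 0 f, by
      simpa [smul_eq_C_mul] using totalDegree_eq_zero_iff_eq_C.1 (Nat.le_zero.1 hf)⟩
  | succ n ih =>
    obtain ⟨g, rfl⟩ := dvd_of_eval_eq_zero_of_totalDegree_lt_card (T 0)
      (hf.trans_lt (hT 0)) (hvan 0)
    rcases eq_or_ne g 0 with rfl | hg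
    · exact ⟨0, by simp⟩
    have hgdeg : g.totalDegree ≤ n := by
      have := one_le_totalDegree_X_add_X_sub_C (s 0)
      rw [totalDegree_mul_of_isDomain (by rintro h; simp [h] at this) hg] at hf
      omega
    have hgvan : ∀ i : Fin n, ∀ t ∈ T i.succ, eval ![s i.succ - t, t] g = 0 := by
      intro i t ht
      have hne : s i.succ - s 0 ≠ 0 := sub_ne_zero.2 (hs.ne (Fin.succ_ne_zero i))
      simpa [hne] using hvan i.succ t ht
    obtain ⟨c, rfl⟩ := ih (hs.comp (Fin.succ_injective _)) (fun i => T i.succ)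
      (fun i => by have := hT i.succ; rw [Fin.val_succ] at this; omega) hgdeg hgvan
    exact ⟨c, by rw [Fin.prod_univ_succ, mul_smul_comm]; rfl⟩

end MvPolynomial

namespace Gamma2

/-- `x + y = lineSum d i` is the `i`-th line of `Γ₂` to be divided out: the lines `x + y = d + j`
in increasing order of `j` (the line `x + y = d + j` has `d - 1 - j` grid points), then
`x + y = 2`. -/
def lineSum (d : ℕ) : Fin (d - 4 + 1) → ℕ :=
  Fin.snoc (fun i : Fin (d - 4) => d + (i + 1)) 2

/-- The `y`-coordinates of the grid points on the line `x + y = lineSum d i`. -/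
def linePoints (d : ℕ) : Fin (d - 4 + 1) → Finset ℕ :=
  Fin.snoc (fun i : Fin (d - 4) => Icc (i + 2) (d - 1)) (range 3)

theorem lineSum_injective (d : ℕ) : Function.Injective (lineSum d) :=
  Fin.snoc_injective_of_injective (fun i j h => Fin.ext (by simpa using h)) (by simp; omega)

theorem lt_card_linePoints_add (d : ℕ) (i : Fin (d - 4 + 1)) :
    d - 4 + 1 < #(linePoints d i) + i := by
  induction i using Fin.lastCases <;> simp [linePoints] <;> omega

theorem mem_of_mem_linePoints {d b : ℕ} (hd : 4 ≤ d) {i : Fin (d - 4 + 1)}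
    (hb : b ∈ linePoints d i) :
    b ≤ lineSum d i ∧ lineSum d i - b < d ∧ b < d ∧
      (lineSum d i - b + b = 2 ∨ ∃ j, 1 ≤ j ∧ j ≤ d - 4 ∧ lineSum d i - b + b = d + j) := by
  induction i using Fin.lastCases with
  | last =>
    simp only [lineSum, linePoints, Fin.snoc_last, mem_range] at hb ⊢
    omega
  | cast i =>
    simp only [lineSum, linePoints, Fin.snoc_castSucc, mem_Icc] at hb ⊢
    exact ⟨by omega, by omega, by omega, Or.inr ⟨i + 1, by omega, by omega, by omega⟩⟩

theorem prod_lineSum {R : Type*} [CommRing R] (d : ℕ) :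
    ∏ i, (X 0 + X 1 - C (lineSum d i : R) : MvPolynomial (Fin 2) R) =
      (X 0 + X 1 - C 2) * ∏ j ∈ Icc 1 (d - 4), (X 0 + X 1 - C ((d : R) + (j : R))) := by
  rw [Fin.prod_univ_castSucc, mul_comm]
  simp only [lineSum, Fin.snoc_castSucc, Fin.snoc_last, Nat.cast_ofNat]
  rw [Fin.prod_univ_eq_prod_range (fun i => X 0 + X 1 - C ((d + (i + 1) : ℕ) : R)), range_eq_Ico,
    prod_Ico_add' (fun i => X 0 + X 1 - C ((d + i : ℕ) : R)), zero_add,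
    Ico_add_one_right_eq_Icc]
  push_cast
  rfl

end Gamma2

/-- let `d ≥ 4` and let `Γ₂` be the set of points of the grid
`{0,…,d−1}²` lying on the line `x+y = 2` or one of the lines `x+y = d+j`,
`1 ≤ j ≤ d−4`.  Every polynomial `f ∈ ℝ[x,y]` of total degree at most `d−3`
vanishing on `Γ₂` is a scalar multiple of
`(x+y−2)·∏_{j=1}^{d−4}(x+y−(d+j))`. -/
theorem stmt9 (d : ℕ) (hd : 4 ≤ d) (f : MvPolynomial (Fin 2) ℝ)
    (hdeg : f.totalDegree ≤ d - 3)
    (hvan : ∀ a b : ℕ, a < d → b < d →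
      (a + b = 2 ∨ ∃ j, 1 ≤ j ∧ j ≤ d - 4 ∧ a + b = d + j) →
      eval ![(a : ℝ), (b : ℝ)] f = 0) :
    ∃ c : ℝ, f = c • ((X 0 + X 1 - C 2) *
      ∏ j ∈ Finset.Icc 1 (d - 4), (X 0 + X 1 - C ((d : ℝ) + (j : ℝ)))) := by
  have hvan_line : ∀ i, ∀ t ∈ (Gamma2.linePoints d i).map Nat.castEmbedding,
      eval ![(Gamma2.lineSum d i : ℝ) - t, t] f = 0 := by
    intro i t ht
    obtain ⟨b, hb, rfl⟩ := mem_map.1 ht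
    obtain ⟨hbk, ha, hbd, hab⟩ := Gamma2.mem_of_mem_linePoints hd hb
    rw [Nat.castEmbedding_apply, ← Nat.cast_sub hbk]
    exact hvan _ _ ha hbd hab
  obtain ⟨c, hc⟩ := eq_smul_prod_of_eval_eq_zero
    (Nat.cast_injective.comp (Gamma2.lineSum_injective d)) _
    (by simpa using Gamma2.lt_card_linePoints_add d) (hdeg.trans (by omega)) hvan_line
  exact ⟨c, hc.trans (congrArg (c • ·) (Gamma2.prod_lineSum d))⟩
end
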